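/- Let η₀ = ((0,0,0,0),(1,0,0,0)), ξ₁ = ((1,1,1,0),(1,1,1,0)), ξ₂ = ((1,0,1,0),(0,0,1,0)), ξ₃ = ((1,1,1,0),(0,0,1,0)), ξ₄ = ((1,0,1,0),(0,1,1,0)) in 𝔽₂^4 × 𝔽₂^4, and let χ₁, …, χ₁₀ be the ten odd characteristics with a₁ = 0, a₂ = 1, b₁ = 0, b₂ = 1 (as in Lemma 3.1 of the paper), with χᵢ′ = χᵢ + η₀. Then no further pairs can be added to the system: every characteristic χ ∈ 𝔽₂^4 × 𝔽₂^4 such that χ and χ + η₀ are both odd and both systems ξ₁, ξ₂, ξ₃, ξ₄, χ and ξ₁, ξ₂, ξ₃, ξ₄, χ + η₀ are azygetic and essentially independent belongs to {χ₁, …, χ₁₀} ∪ {χ₁′, …, χ₁₀′}. -/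

import Mathlib

/-- Theta characteristics for genus `g`, identified with pairs `(a, b) ∈ 𝔽₂^g × 𝔽₂^g`,
added componentwise. -/
abbrev ThetaChar (g : ℕ) := (Fin g → ZMod 2) × (Fin g → ZMod 2)

/-- The parity form `q(c) = a · b = ∑ᵢ aᵢ bᵢ ∈ 𝔽₂`. -/
def qform {g : ℕ} (c : ThetaChar g) : ZMod 2 := ∑ i, c.1 i * c.2 i

/-- A characteristic is odd if `q(c) = 1`. -/
def IsOddChar {g : ℕ} (c : ThetaChar g) : Prop := qform c = 1

/-- A characteristic is even if `q(c) = 0`. -/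
def IsEvenChar {g : ℕ} (c : ThetaChar g) : Prop := qform c = 0

/-- A triple `c₁, c₂, c₃` is azygetic if `q(c₁+c₂+c₃) + q(c₁) + q(c₂) + q(c₃) = 1`. -/
def AzyTriple {g : ℕ} (c₁ c₂ c₃ : ThetaChar g) : Prop :=
  qform (c₁ + c₂ + c₃) + qform c₁ + qform c₂ + qform c₃ = 1

/-- An indexed system is azygetic if every triple of members with three distinct
indices is an azygetic triple. -/
def AzySystem {g n : ℕ} (c : Fin n → ThetaChar g) : Prop :=
  ∀ i j k : Fin n, i ≠ j → j ≠ k → i ≠ k → AzyTriple (c i) (c j) (c k)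

/-- A system is essentially independent if every sum over a nonempty index subset of
even cardinality is nonzero. -/
def EssInd {g n : ℕ} (c : Fin n → ThetaChar g) : Prop :=
  ∀ s : Finset (Fin n), s.Nonempty → Even s.card → ∑ i ∈ s, c i ≠ 0

/-- The two-torsion point `η₀`. -/
def η₀ : ThetaChar 4 := (![0, 0, 0, 0], ![1, 0, 0, 0])

/-- The explicit odd characteristics `ξ₁, …, ξ₄`. -/
def ξ : Fin 4 → ThetaChar 4 :=
  ![(![1, 1, 1, 0], ![1, 1, 1, 0]),
    (![1, 0, 1, 0], ![0, 0, 1, 0]),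
    (![1, 1, 1, 0], ![0, 0, 1, 0]),
    (![1, 0, 1, 0], ![0, 1, 1, 0])]

/-- The explicit odd characteristics `χ₁, …, χ₁₀` (the ten odd characteristics with
`a₁ = 0`, `a₂ = 1`, `b₁ = 0`, `b₂ = 1`). -/
def χ : Fin 10 → ThetaChar 4 :=
  ![(![0, 1, 1, 0], ![0, 1, 0, 0]),
    (![0, 1, 0, 0], ![0, 1, 0, 0]),
    (![0, 1, 0, 1], ![0, 1, 0, 0]),
    (![0, 1, 1, 1], ![0, 1, 0, 0]),
    (![0, 1, 0, 1], ![0, 1, 1, 0]),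
    (![0, 1, 0, 0], ![0, 1, 1, 0]),
    (![0, 1, 0, 0], ![0, 1, 1, 1]),
    (![0, 1, 1, 1], ![0, 1, 1, 1]),
    (![0, 1, 0, 0], ![0, 1, 0, 1]),
    (![0, 1, 1, 0], ![0, 1, 0, 1])]

instance {g : ℕ} (c : ThetaChar g) : Decidable (IsOddChar c) := by
  unfold IsOddChar; infer_instance

instance {g n : ℕ} (c : Fin n → ThetaChar g) : Decidable (AzySystem c) := by
  unfold AzySystem AzyTriple; infer_instance

instance {g n : ℕ} (c : Fin n → ThetaChar g) : Decidable (EssInd c) := by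
  unfold EssInd; infer_instance

set_option maxRecDepth 10000 in
set_option synthInstance.maxSize 100000 in
/-- No further pairs can be added to the system: every characteristic `c` such that
`c` and `c + η₀` are both odd and both systems `ξ₁, ξ₂, ξ₃, ξ₄, c` and
`ξ₁, ξ₂, ξ₃, ξ₄, c + η₀` are azygetic and essentially independent belongs to
`{χ₁, …, χ₁₀} ∪ {χ₁′, …, χ₁₀′}` where `χᵢ′ = χᵢ + η₀`. -/
theorem no_further_pairs (c : ThetaChar 4)
    (hodd : IsOddChar c) (hodd' : IsOddChar (c + η₀))
    (hazy : AzySystem (Fin.snoc ξ c)) (hind : EssInd (Fin.snoc ξ c))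
    (hazy' : AzySystem (Fin.snoc ξ (c + η₀))) (hind' : EssInd (Fin.snoc ξ (c + η₀))) :
    ∃ i : Fin 10, c = χ i ∨ c = χ i + η₀ := by
  revert hodd hodd' hazy hind hazy' hind'
  revert c
  decide
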